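/- For any trigonometric polynomial f(θ) = a_0/2 + ∑_{k=1}^{R} (a_k cos(kθ) + b_k sin(kθ)) with real coefficients, f(θ) = a_R cos(Rθ) + ∑_{μ=1}^{2R} f(θ_μ) D*(θ - θ_μ), where θ_μ = (2μ-1)π/(2R) and D* is the modified Dirichlet kernel of order R. -/

import Mathlib

/-!
Write `D*(x) = ∑_{j ≤ R} w_j cos (j x)` with `w_0 = w_R = 1/(2R)` and `w_j = 1/R` otherwise. Then
`∑_μ g(θ_μ) D*(θ - θ_μ) = ∑_j w_j (cos (jθ) ⟨g, cos j⟩ + sin (jθ) ⟨g, sin j⟩)` for the discrete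
inner product `⟨g, h⟩ = ∑_μ g(θ_μ) h(θ_μ)`. The nodes are symmetric under `θ ↦ 2π - θ`, so
`⟨cos k, sin j⟩ = 0`, and `∑_μ exp (i n θ_μ)` is a geometric sum over `2R`-th roots of unity that
vanishes unless `2R ∣ n`. Hence the `cos k` (`k < R`) and `sin k` (`1 ≤ k ≤ R`) are orthogonal
with `⟨cos k, cos k⟩ = ⟨sin k, sin k⟩ = 1 / w_k`, and are reproduced exactly. The remaining basis
function `cos (Rθ)` vanishes at every node, which is why `a_R cos (Rθ)` must be added back.
-/

open Real Finset

/-- The modified Dirichlet kernel of order `R`, in its smooth cosine-sum form;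
it equals `sin (R x) / (2 R * tan (x / 2))` wherever the latter is defined. -/
noncomputable def modDirichlet (R : ℕ) (x : ℝ) : ℝ :=
  1 / (2 * R) + Real.cos (R * x) / (2 * R) +
    (1 / R) * ∑ k ∈ Finset.Icc 1 (R - 1), Real.cos (k * x)

noncomputable def node (R μ : ℕ) : ℝ := (2 * μ - 1) * π / (2 * R)

lemma node_two_mul_add_one_sub {R μ : ℕ} (hR : R ≠ 0) (hμ : μ ≤ 2 * R + 1) :
    node R (2 * R + 1 - μ) = 2 * π - node R μ := by
  simp only [node]
  push_cast [hμ]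
  field_simp
  ring

lemma sum_node_eq_zero_of_odd (R : ℕ) {g : ℝ → ℝ} (hg : ∀ x, g (2 * π - x) = -g x) :
    ∑ μ ∈ Icc 1 (2 * R), g (node R μ) = 0 := by
  rcases eq_or_ne R 0 with rfl | hR
  · simp
  refine sum_involution (fun μ _ => 2 * R + 1 - μ) (fun μ hμ => ?_) (fun μ hμ _ => ?_)
    (fun μ hμ => ?_) (fun μ hμ => ?_) <;> rw [mem_Icc] at hμ
  · rw [node_two_mul_add_one_sub hR (by omega), hg, add_neg_cancel]
  · omega
  · rw [mem_Icc]; omega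
  · omega

lemma sum_sin_mul_cos_node (R j k : ℕ) :
    ∑ μ ∈ Icc 1 (2 * R), sin (k * node R μ) * cos (j * node R μ) = 0 :=
  sum_node_eq_zero_of_odd R (g := fun x => sin (k * x) * cos (j * x)) fun x => by
    rw [mul_sub, mul_sub, sin_nat_mul_two_pi_sub, cos_nat_mul_two_pi_sub, neg_mul]

lemma cos_mul_node_eq_zero (R μ : ℕ) (hR : R ≠ 0) : cos (R * node R μ) = 0 :=
  cos_eq_zero_iff.2 ⟨μ - 1, by simp only [node]; push_cast; field_simp; ring⟩

lemma cos_two_mul_mul_node (R μ : ℕ) (hR : R ≠ 0) : cos (2 * R * node R μ) = -1 := by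
  rw [mul_assoc, cos_two_mul, cos_mul_node_eq_zero R μ hR]
  norm_num

lemma sum_cos_int_mul_node_of_not_dvd (R : ℕ) {n : ℤ} (hn : ¬ (2 * R : ℤ) ∣ n) :
    ∑ μ ∈ Icc 1 (2 * R), cos (n * node R μ) = 0 := by
  rcases eq_or_ne R 0 with rfl | hR
  · simp
  have hζ := Complex.isPrimitiveRoot_exp (2 * R) (by positivity)
  set ω := Complex.exp (2 * π * Complex.I / (2 * R : ℕ)) ^ n
  have hω : ω ≠ 1 := by
    rw [Ne, hζ.zpow_eq_one_iff_dvd]; push_cast; exact hn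
  have hω2R : ω ^ (2 * R) = 1 := by
    rw [← zpow_natCast, ← zpow_mul]
    exact (hζ.zpow_eq_one_iff_dvd _).2 (Dvd.intro_left _ rfl)
  have hterm : ∀ m : ℕ, Complex.exp (((n * node R (1 + m) : ℝ) : ℂ) * Complex.I) =
      Complex.exp ((n * π / (2 * R) : ℝ) * Complex.I) * ω ^ m := by
    intro m
    simp only [ω]
    rw [← Complex.exp_int_mul, ← Complex.exp_nat_mul, ← Complex.exp_add]
    congr 1
    simp only [node]
    push_cast
    field_simp
    ring
  calc ∑ μ ∈ Icc 1 (2 * R), cos (n * node R μ)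
      = (∑ m ∈ range (2 * R), Complex.exp (((n * node R (1 + m) : ℝ) : ℂ) * Complex.I)).re := by
        rw [Complex.re_sum, ← Ico_add_one_right_eq_Icc, sum_Ico_eq_sum_range, Nat.add_sub_cancel]
        simp only [Complex.exp_ofReal_mul_I_re]
    _ = 0 := by
        simp only [hterm, ← mul_sum, geom_sum_eq hω, hω2R, sub_self, zero_div, mul_zero,
          Complex.zero_re]

lemma sum_cos_mul_cos_add_sum_sin_mul_sin_node (R j k : ℕ) :
    ∑ μ ∈ Icc 1 (2 * R), cos (k * node R μ) * cos (j * node R μ) +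
      ∑ μ ∈ Icc 1 (2 * R), sin (k * node R μ) * sin (j * node R μ) =
      ∑ μ ∈ Icc 1 (2 * R), cos (((k - j : ℤ) : ℝ) * node R μ) := by
  rw [← sum_add_distrib]
  refine sum_congr rfl fun μ _ => ?_
  rw [Int.cast_sub, sub_mul, cos_sub]
  push_cast
  ring

lemma sum_cos_mul_cos_sub_sum_sin_mul_sin_node (R j k : ℕ) :
    ∑ μ ∈ Icc 1 (2 * R), cos (k * node R μ) * cos (j * node R μ) -
      ∑ μ ∈ Icc 1 (2 * R), sin (k * node R μ) * sin (j * node R μ) =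
      ∑ μ ∈ Icc 1 (2 * R), cos (((k + j : ℤ) : ℝ) * node R μ) := by
  rw [← sum_sub_distrib]
  refine sum_congr rfl fun μ _ => ?_
  rw [Int.cast_add, add_mul, cos_add]
  push_cast
  ring

noncomputable def kernelWeight (R j : ℕ) : ℝ := if j = 0 ∨ j = R then 1 / (2 * R) else 1 / R

lemma kernelWeight_ne_zero {R : ℕ} (hR : R ≠ 0) (j : ℕ) : kernelWeight R j ≠ 0 := by
  unfold kernelWeight
  split_ifs <;> positivity

lemma modDirichlet_eq_sum_kernelWeight_mul_cos {R : ℕ} (hR : R ≠ 0) (x : ℝ) :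
    modDirichlet R x = ∑ j ∈ range (R + 1), kernelWeight R j * cos (j * x) := by
  obtain ⟨R, rfl⟩ := Nat.exists_eq_add_one_of_ne_zero hR
  have hmid : ∀ j ∈ Icc 1 R, kernelWeight (R + 1) j * cos (j * x) = cos (j * x) / (R + 1) := by
    intro j hj
    rw [mem_Icc] at hj
    rw [kernelWeight, if_neg (by omega)]
    push_cast
    ring
  rw [sum_range_succ, range_eq_Ico, sum_eq_sum_Ico_succ_bot (Nat.succ_pos R), zero_add,
    Nat.succ_eq_add_one, Ico_add_one_right_eq_Icc, sum_congr rfl hmid, ← sum_div, modDirichlet,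
    Nat.add_sub_cancel]
  simp only [kernelWeight, true_or, or_true, if_true, CharP.cast_eq_zero, zero_mul, cos_zero]
  push_cast
  ring

lemma sum_cos_int_mul_node_of_abs_lt {R : ℕ} {n : ℤ} (hn : |n| < 2 * R) :
    ∑ μ ∈ Icc 1 (2 * R), cos (n * node R μ) = if n = 0 then (2 * R : ℝ) else 0 := by
  split_ifs with h0
  · simp [h0]
  · exact sum_cos_int_mul_node_of_not_dvd R fun h => h0 (Int.eq_zero_of_abs_lt_dvd h hn)

lemma sum_cos_mul_cos_node {R j k : ℕ} (hj : j ≤ R) (hk : k < R) :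
    ∑ μ ∈ Icc 1 (2 * R), cos (k * node R μ) * cos (j * node R μ) =
      if j = k then (kernelWeight R k)⁻¹ else 0 := by
  have hsub := sum_cos_mul_cos_add_sum_sin_mul_sin_node R j k
  have hadd := sum_cos_mul_cos_sub_sum_sin_mul_sin_node R j k
  rw [sum_cos_int_mul_node_of_abs_lt (by rw [abs_lt]; omega)] at hsub hadd
  rw [kernelWeight]
  split_ifs at hsub hadd ⊢ <;> first | omega | (rw [one_div, inv_inv]; linarith) | linarith

lemma sum_sin_mul_sin_node {R j k : ℕ} (hj : j ≤ R) (hk0 : k ≠ 0) (hk : k ≤ R) :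
    ∑ μ ∈ Icc 1 (2 * R), sin (k * node R μ) * sin (j * node R μ) =
      if j = k then (kernelWeight R k)⁻¹ else 0 := by
  have hsub := sum_cos_mul_cos_add_sum_sin_mul_sin_node R j k
  have hadd := sum_cos_mul_cos_sub_sum_sin_mul_sin_node R j k
  rw [sum_cos_int_mul_node_of_abs_lt (by rw [abs_lt]; omega)] at hsub
  rw [kernelWeight]
  by_cases hjkR : j = R ∧ k = R
  · obtain ⟨rfl, rfl⟩ := hjkR
    have h2k : ∀ μ ∈ Icc 1 (2 * k), cos (((k + k : ℤ) : ℝ) * node k μ) = -1 := fun μ _ => by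
      rw [← cos_two_mul_mul_node k μ hk0]; push_cast; ring_nf
    rw [sum_congr rfl h2k, sum_const, Nat.card_Icc] at hadd
    simp only [sub_self, if_true, or_true, nsmul_eq_mul, one_div, inv_inv] at hsub hadd ⊢
    push_cast at hadd
    linarith
  rw [sum_cos_int_mul_node_of_abs_lt (by rw [abs_lt]; omega)] at hadd
  split_ifs at hsub hadd ⊢ <;> first | omega | (rw [one_div, inv_inv]; linarith) | linarith

lemma sum_mul_modDirichlet_sub {ι : Type*} (s : Finset ι) (c x : ι → ℝ) {R : ℕ} (hR : R ≠ 0)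
    (θ : ℝ) :
    ∑ i ∈ s, c i * modDirichlet R (θ - x i) =
      ∑ j ∈ range (R + 1), kernelWeight R j *
        (cos (j * θ) * ∑ i ∈ s, c i * cos (j * x i) +
          sin (j * θ) * ∑ i ∈ s, c i * sin (j * x i)) := by
  simp_rw [modDirichlet_eq_sum_kernelWeight_mul_cos hR, mul_sum]
  rw [sum_comm]
  refine sum_congr rfl fun j _ => ?_
  rw [← sum_add_distrib, mul_sum]
  refine sum_congr rfl fun i _ => ?_
  rw [mul_sub, cos_sub]
  ring

lemma sum_cos_node_mul_modDirichlet {R k : ℕ} (hk : k ≤ R) (θ : ℝ) :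
    ∑ μ ∈ Icc 1 (2 * R), cos (k * node R μ) * modDirichlet R (θ - node R μ) =
      if k = R then 0 else cos (k * θ) := by
  split_ifs with hkR
  · subst hkR
    rcases eq_or_ne k 0 with rfl | hk0
    · simp
    simp [cos_mul_node_eq_zero _ _ hk0]
  have hR : R ≠ 0 := by omega
  have hterm : ∀ j ∈ range (R + 1), kernelWeight R j *
      (cos (j * θ) * ∑ μ ∈ Icc 1 (2 * R), cos (k * node R μ) * cos (j * node R μ) +
        sin (j * θ) * ∑ μ ∈ Icc 1 (2 * R), cos (k * node R μ) * sin (j * node R μ)) =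
      if j = k then cos (k * θ) else 0 := by
    intro j hj
    rw [sum_cos_mul_cos_node (mem_range_succ_iff.1 hj) (by omega),
      (sum_congr rfl fun _ _ => mul_comm _ _).trans (sum_sin_mul_cos_node R k j)]
    split_ifs with hjk
    · subst hjk
      rw [mul_zero, add_zero]
      field_simp [kernelWeight_ne_zero hR]
    · simp
  rw [sum_mul_modDirichlet_sub _ _ _ hR, sum_congr rfl hterm, sum_ite_eq',
    if_pos (mem_range.2 (by omega))]

lemma sum_sin_node_mul_modDirichlet {R k : ℕ} (hk0 : k ≠ 0) (hk : k ≤ R) (θ : ℝ) :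
    ∑ μ ∈ Icc 1 (2 * R), sin (k * node R μ) * modDirichlet R (θ - node R μ) = sin (k * θ) := by
  have hR : R ≠ 0 := by omega
  have hterm : ∀ j ∈ range (R + 1), kernelWeight R j *
      (cos (j * θ) * ∑ μ ∈ Icc 1 (2 * R), sin (k * node R μ) * cos (j * node R μ) +
        sin (j * θ) * ∑ μ ∈ Icc 1 (2 * R), sin (k * node R μ) * sin (j * node R μ)) =
      if j = k then sin (k * θ) else 0 := by
    intro j hj
    rw [sum_sin_mul_sin_node (mem_range_succ_iff.1 hj) hk0 hk,
      sum_sin_mul_cos_node R j k]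
    split_ifs with hjk
    · subst hjk
      rw [mul_zero, zero_add]
      field_simp [kernelWeight_ne_zero hR]
    · simp
  rw [sum_mul_modDirichlet_sub _ _ _ hR, sum_congr rfl hterm, sum_ite_eq',
    if_pos (mem_range.2 (by omega))]

theorem modified_dirichlet_interpolation (R : ℕ) (hR : 1 ≤ R) (a b : ℕ → ℝ)
    (f : ℝ → ℝ)
    (hf : ∀ θ : ℝ, f θ = a 0 / 2 +
      ∑ k ∈ Finset.Icc 1 R, (a k * Real.cos (k * θ) + b k * Real.sin (k * θ)))
    (θpt : ℕ → ℝ) (hθ : ∀ μ : ℕ, θpt μ = (2 * μ - 1) * Real.pi / (2 * R)) :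
    ∀ θ : ℝ, f θ = a R * Real.cos (R * θ) +
      ∑ μ ∈ Finset.Icc 1 (2 * R), f (θpt μ) * modDirichlet R (θ - θpt μ) := by
  intro θ
  obtain rfl : θpt = node R := funext hθ
  have hconst : ∑ μ ∈ Icc 1 (2 * R), modDirichlet R (θ - node R μ) = 1 := by
    simpa [show R ≠ 0 by omega, eq_comm] using sum_cos_node_mul_modDirichlet (Nat.zero_le R) θ
  have hbasis : ∀ k ∈ Icc 1 R,
      ∑ μ ∈ Icc 1 (2 * R), (a k * cos (k * node R μ) + b k * sin (k * node R μ)) *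
        modDirichlet R (θ - node R μ) =
      a k * cos (k * θ) + b k * sin (k * θ) - if k = R then a R * cos (R * θ) else 0 := by
    intro k hk
    rw [mem_Icc] at hk
    simp only [add_mul, mul_assoc, sum_add_distrib, ← mul_sum,
      sum_cos_node_mul_modDirichlet hk.2, sum_sin_node_mul_modDirichlet (by omega) hk.2]
    split_ifs with hkR
    · subst hkR; ring
    · ring
  have hexpand : ∀ μ ∈ Icc 1 (2 * R), f (node R μ) * modDirichlet R (θ - node R μ) =
      a 0 / 2 * modDirichlet R (θ - node R μ) + ∑ k ∈ Icc 1 R,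
        (a k * cos (k * node R μ) + b k * sin (k * node R μ)) * modDirichlet R (θ - node R μ) :=
    fun μ _ => by rw [hf, add_mul, sum_mul]
  rw [sum_congr rfl hexpand, sum_add_distrib, ← mul_sum, hconst, sum_comm, sum_congr rfl hbasis,
    sum_sub_distrib, sum_ite_eq', if_pos (by simp; omega), hf θ]
  ring
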